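/- arXiv:1105.3344 — 3 statements merged into one kernel-verified Lean document; each statement's English description precedes it below -/
import Mathlib

section
/- Let F : ℂ₊ → ℂ₊ be an analytic function on the upper half-plane with Im F(z) > Im z for all z, satisfying the functional equation F(F(z)) - F(z) = F(z) - z for all z in the upper half-plane. Then there exist a ∈ ℝ and b > 0 such that F(z) = z + a + ib for all z. -/
/-! The displacement `G z = F z - z` maps the upper half-plane into itself and the functional
equation says `G ∘ F = G`, so `F^[n] z = z + n • G z`. By Schwarz–Pick, `G` does not increase the
pseudo-hyperbolic distance `‖a - b‖ / ‖a - conj b‖`; applied to `F^[k] z` and `F^[m] w` with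
`m / k → t` this gives `‖p - q‖ ‖p - t conj q‖ ≤ ‖p - conj q‖ ‖p - t q‖` for `p = G z`, `q = G w`
and every `t > 0`, which forces `‖p‖ = ‖q‖`. So `‖G‖` is constant and, by the maximum modulus
principle, so is `G`. -/

open Complex Metric Filter Set ComplexConjugate Topology
open UpperHalfPlane (upperHalfPlaneSet isOpen_upperHalfPlaneSet)

lemma norm_sub_lt_norm_sub_conj {w v : ℂ} (hw : 0 < w.im) (hv : 0 < v.im) :
    ‖w - v‖ < ‖w - conj v‖ := by
  have h : ‖w - v‖ ^ 2 < ‖w - conj v‖ ^ 2 := by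
    simp only [Complex.sq_norm, normSq_apply, sub_re, sub_im, conj_re, conj_im]
    nlinarith [mul_pos hw hv]
  exact lt_of_pow_lt_pow_left₀ 2 (norm_nonneg _) h

lemma sub_conj_ne_zero {w v : ℂ} (hw : 0 < w.im) (hv : 0 < v.im) : w - conj v ≠ 0 :=
  norm_pos_iff.mp ((norm_nonneg _).trans_lt (norm_sub_lt_norm_sub_conj hw hv))

lemma norm_div_sub_conj_lt_one {w v : ℂ} (hw : 0 < w.im) (hv : 0 < v.im) :
    ‖(w - v) / (w - conj v)‖ < 1 := by
  rw [norm_div, div_lt_one (norm_pos_iff.mpr (sub_conj_ne_zero hw hv))]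
  exact norm_sub_lt_norm_sub_conj hw hv

lemma im_div_one_sub_pos {b u : ℂ} (hb : 0 < b.im) (hu : ‖u‖ < 1) :
    0 < ((b - conj b * u) / (1 - u)).im := by
  have hu1 : 1 - u ≠ 0 := sub_ne_zero.mpr fun h ↦ by simp [← h] at hu
  have hu2 : normSq u < 1 := by
    rw [normSq_eq_norm_sq]
    nlinarith [norm_nonneg u]
  have him : ((b - conj b * u) / (1 - u)).im = b.im * (1 - normSq u) / normSq (1 - u) := by
    simp only [div_im, ← sub_div]
    congr 1
    simp only [normSq_apply, sub_re, sub_im, mul_re, mul_im, conj_re, conj_im, one_re, one_im]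
    ring
  rw [him]
  exact div_pos (mul_pos hb (by linarith)) (normSq_pos.mpr hu1)

/-- Schwarz–Pick lemma for the upper half-plane. -/
theorem norm_sub_mul_norm_sub_conj_le {G : ℂ → ℂ} (hd : DifferentiableOn ℂ G upperHalfPlaneSet)
    (hm : MapsTo G upperHalfPlaneSet upperHalfPlaneSet) {a b : ℂ} (ha : 0 < a.im) (hb : 0 < b.im) :
    ‖G a - G b‖ * ‖a - conj b‖ ≤ ‖G a - conj (G b)‖ * ‖a - b‖ := by
  set S : ℂ → ℂ := fun u ↦ (b - conj b * u) / (1 - u)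
  set T : ℂ → ℂ := fun w ↦ (w - G b) / (w - conj (G b))
  have hS : MapsTo S (ball 0 1) upperHalfPlaneSet := fun u hu ↦
    im_div_one_sub_pos hb (mem_ball_zero_iff.mp hu)
  have hT : MapsTo T upperHalfPlaneSet (ball 0 1) := fun w hw ↦
    mem_ball_zero_iff.mpr (norm_div_sub_conj_lt_one hw (hm hb))
  have hdS : DifferentiableOn ℂ S (ball 0 1) :=
    DifferentiableOn.div (by fun_prop) (by fun_prop) fun u hu h ↦ by
      simp [show u = 1 by linear_combination -h] at hu
  have hdT : DifferentiableOn ℂ T upperHalfPlaneSet :=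
    DifferentiableOn.div (by fun_prop) (by fun_prop) fun w hw ↦ sub_conj_ne_zero hw (hm hb)
  have hSu₀ : S ((a - b) / (a - conj b)) = a := by
    have hab := sub_conj_ne_zero ha hb
    have hbb := sub_conj_ne_zero hb hb
    have h1 : 1 - (a - b) / (a - conj b) = (b - conj b) / (a - conj b) := by field_simp; ring
    simp only [S, h1]
    rw [div_eq_iff (div_ne_zero hbb hab)]
    field_simp
    ring
  have hschwarz := norm_le_norm_of_mapsTo_ball ((hdT.comp hd hm).comp hdS hS)
    (((hT.comp hm).comp hS).mono_right ball_subset_closedBall) (by simp [S, T])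
    (norm_div_sub_conj_lt_one ha hb)
  simp only [Function.comp_apply, hSu₀, T, norm_div] at hschwarz
  rw [div_le_div_iff₀ (norm_pos_iff.mpr (sub_conj_ne_zero (hm ha) (hm hb)))
    (norm_pos_iff.mpr (sub_conj_ne_zero ha hb))] at hschwarz
  exact hschwarz.trans_eq (mul_comm _ _)

lemma tendsto_inv_smul_add_nsmul_sub_floor_nsmul {E : Type*} [NormedAddCommGroup E]
    [NormedSpace ℝ E] {t : ℝ} (ht : 0 ≤ t) (c d u v : E) :
    Tendsto (fun k : ℕ ↦ (k : ℝ)⁻¹ • ((c + k • u) - (d + ⌊t * k⌋₊ • v))) atTop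
      (𝓝 (u - t • v)) := by
  have hinv : Tendsto (fun k : ℕ ↦ (k : ℝ)⁻¹) atTop (𝓝 0) :=
    tendsto_inv_atTop_zero.comp tendsto_natCast_atTop_atTop
  have hratio : Tendsto (fun k : ℕ ↦ (⌊t * k⌋₊ : ℝ) / k) atTop (𝓝 t) :=
    (tendsto_nat_floor_mul_div_atTop ht).comp tendsto_natCast_atTop_atTop
  have hlim := ((hinv.smul_const (c - d)).add_const u).sub (hratio.smul_const v)
  rw [zero_smul, zero_add] at hlim
  refine hlim.congr' ((eventually_ne_atTop 0).mono fun k hk ↦ ?_)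
  have hk' : (k : ℝ) ≠ 0 := Nat.cast_ne_zero.mpr hk
  simp only [← Nat.cast_smul_eq_nsmul ℝ, smul_add, smul_sub, smul_smul, div_eq_inv_mul,
    inv_mul_cancel₀ hk', one_smul]
  abel

lemma le_of_forall_nsmul_le {E F : Type*} [NormedAddCommGroup E] [NormedSpace ℝ E]
    [NormedAddCommGroup F] [NormedSpace ℝ F] {α β t : ℝ} (ht : 0 ≤ t) {c d u v : E}
    {c' d' u' v' : F}
    (h : ∀ k m : ℕ, α * ‖(c + k • u) - (d + m • v)‖ ≤ β * ‖(c' + k • u') - (d' + m • v')‖) :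
    α * ‖u - t • v‖ ≤ β * ‖u' - t • v'‖ := by
  refine le_of_tendsto_of_tendsto'
    ((tendsto_inv_smul_add_nsmul_sub_floor_nsmul ht c d u v).norm.const_mul α)
    ((tendsto_inv_smul_add_nsmul_sub_floor_nsmul ht c' d' u' v').norm.const_mul β) fun k ↦ ?_
  rw [norm_smul, norm_smul, Real.norm_of_nonneg (by positivity), mul_left_comm,
    mul_left_comm β]
  exact mul_le_mul_of_nonneg_left (h k _) (by positivity)

lemma norm_eq_of_forall_norm_sub_mul_le {p q : ℂ} (hp : 0 < p.im) (hq : 0 < q.im)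
    (h : ∀ t : ℝ, 0 < t → ‖p - q‖ * ‖p - t • conj q‖ ≤ ‖p - conj q‖ * ‖p - t • q‖) :
    ‖p‖ = ‖q‖ := by
  set A := normSq p
  set B := normSq q
  have hB : 0 < B := normSq_pos.mpr fun h ↦ by simp [h] at hq
  have hsq : ∀ t : ℝ, 0 < t →
      normSq (p - q) * normSq (p - t • conj q) ≤ normSq (p - conj q) * normSq (p - t • q) := by
    intro t ht
    simpa only [mul_pow, ← normSq_eq_norm_sq] using
      pow_le_pow_left₀ (mul_nonneg (norm_nonneg _) (norm_nonneg _)) (h t ht) 2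
  have hfactor : ∀ t : ℝ, normSq (p - conj q) * normSq (p - t • q) -
      normSq (p - q) * normSq (p - t • conj q) = 4 * p.im * q.im * ((1 - t) * (A - t * B)) := by
    intro t
    simp only [A, B, normSq_apply, sub_re, sub_im, real_smul, mul_re, mul_im, conj_re, conj_im,
      ofReal_re, ofReal_im]
    ring
  -- `t` halfway between `1` and `A / B` makes `(1 - t) * (A - t * B)` negative unless `A = B`.
  set t := (A + B) / (2 * B)
  have ht : (1 - t) * (A - t * B) * (4 * B) = -(A - B) ^ 2 := by
    simp only [t]
    field_simp
    ring
  have hnonneg : 0 ≤ (1 - t) * (A - t * B) := by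
    rw [← mul_nonneg_iff_of_pos_left (by positivity : 0 < 4 * p.im * q.im), ← hfactor, sub_nonneg]
    exact hsq t (div_pos (by linarith [normSq_nonneg p]) (by linarith))
  have hsq_nonpos : (A - B) ^ 2 ≤ 0 := by
    nlinarith [mul_nonneg hnonneg hB.le]
  have hAB : A = B := sub_eq_zero.mp (pow_eq_zero_iff two_ne_zero |>.mp
    (le_antisymm hsq_nonpos (sq_nonneg _)))
  rw [norm_def, norm_def]
  exact congrArg _ hAB

lemma map_iterate_sub_iterate {A : Type*} [AddGroup A] {F : A → A} {U : Set A}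
    (hmap : MapsTo F U U) (heq : ∀ z ∈ U, F (F z) - F z = F z - z) {z : A} (hz : z ∈ U)
    (n : ℕ) : F (F^[n] z) - F^[n] z = F z - z := by
  induction n with
  | zero => rfl
  | succ n ih => rw [Function.iterate_succ_apply', heq _ (hmap.iterate n hz), ih]

lemma iterate_eq_add_nsmul_sub {A : Type*} [AddCommGroup A] {F : A → A} {U : Set A}
    (hmap : MapsTo F U U) (heq : ∀ z ∈ U, F (F z) - F z = F z - z) {z : A} (hz : z ∈ U)
    (n : ℕ) : F^[n] z = z + n • (F z - z) := by
  induction n with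
  | zero => simp
  | succ n ih =>
    rw [Function.iterate_succ_apply', ← sub_add_cancel (F (F^[n] z)) (F^[n] z),
      map_iterate_sub_iterate hmap heq hz, ih, succ_nsmul]
    abel

/-- Lemma 5.1 (Appendix): an analytic self-map `F` of the upper half-plane with
`Im F(z) > Im z` satisfying `F(F(z)) - F(z) = F(z) - z` is a translation `z + a + ib`
with `b > 0`. -/
theorem fixed_point_translation (F : ℂ → ℂ)
    (hmap : ∀ z : ℂ, 0 < z.im → 0 < (F z).im)
    (hanal : AnalyticOn ℂ F {z : ℂ | 0 < z.im})
    (him : ∀ z : ℂ, 0 < z.im → z.im < (F z).im)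
    (heq : ∀ z : ℂ, 0 < z.im → F (F z) - F z = F z - z) :
    ∃ (a b : ℝ), 0 < b ∧ ∀ z : ℂ, 0 < z.im → F z = z + a + b * Complex.I := by
  have hF : MapsTo F upperHalfPlaneSet upperHalfPlaneSet := hmap
  set G : ℂ → ℂ := fun z ↦ F z - z
  have hG : MapsTo G upperHalfPlaneSet upperHalfPlaneSet := fun z hz ↦ by
    simpa [G] using him z hz
  have hGd : DifferentiableOn ℂ G upperHalfPlaneSet :=
    hanal.differentiableOn.sub differentiableOn_id
  have hI : I ∈ upperHalfPlaneSet := by simp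
  have hGF : ∀ z ∈ upperHalfPlaneSet, ∀ n : ℕ, G (F^[n] z) = G z :=
    fun _ hz ↦ map_iterate_sub_iterate hF heq hz
  have hFG : ∀ z ∈ upperHalfPlaneSet, ∀ n : ℕ, F^[n] z = z + n • G z :=
    fun _ hz ↦ iterate_eq_add_nsmul_sub hF heq hz
  have hnorm : ∀ z ∈ upperHalfPlaneSet, ‖G z‖ = ‖G I‖ := fun z hz ↦
    norm_eq_of_forall_norm_sub_mul_le (hG hz) (hG hI) fun t ht ↦
      le_of_forall_nsmul_le ht.le fun k m ↦ by
        have := norm_sub_mul_norm_sub_conj_le hGd hG (hF.iterate k hz) (hF.iterate m hI)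
        rwa [hGF z hz, hGF I hI, hFG z hz, hFG I hI, map_add, map_nsmul] at this
  have hconst := eqOn_of_isPreconnected_of_isMaxOn_norm (convex_halfSpace_im_gt 0).isPreconnected
    isOpen_upperHalfPlaneSet hGd hI fun z hz ↦ (hnorm z hz).le
  refine ⟨(G I).re, (G I).im, hG hI, fun z hz ↦ ?_⟩
  have hGz : F z - z = G I := hconst hz
  rw [add_assoc, re_add_im, ← hGz]
  ring
end

section
/- Fix θ ∈ [0, π] and set φ(x) = (sin θ)/2 − (1/√2) · [ (x² + (cos θ/2)x + 1/16)^{1/2} − x cos θ − (cos 2θ)/4 ]^{1/2} for x ∈ ℝ. Then φ(x) ≤ 0 for all x ∈ ℝ, with maximum value φ(0) = 0. -/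
/-!
Since `cos² θ ≤ 1`, the radicand `x² + (cos θ/2) x + 1/16` dominates `(x cos θ + 1/4)²`, so the
inner expression is at least `1/4 - cos 2θ/4 = sin² θ/2`, with equality at `x = 0`. Taking square
roots, `(1/√2) · √(sin² θ/2) = sin θ/2` because `sin θ ≥ 0` on `[0, π]`.
-/

open Real

lemma mul_add_quarter_le_sqrt {c : ℝ} (hc : c ^ 2 ≤ 1) (x : ℝ) :
    x * c + 1 / 4 ≤ √(x ^ 2 + c / 2 * x + 1 / 16) :=
  (le_abs_self _).trans <| abs_le_sqrt <| by nlinarith [sq_nonneg x]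

lemma sin_sq_div_two_le (θ x : ℝ) :
    sin θ ^ 2 / 2 ≤ √(x ^ 2 + cos θ / 2 * x + 1 / 16) - x * cos θ - cos (2 * θ) / 4 := by
  have := mul_add_quarter_le_sqrt (cos_sq_le_one θ) x
  rw [cos_two_mul_eq_one_sub]
  linarith

lemma sqrt_at_zero_sub_cos_two_mul (θ : ℝ) :
    √((0 : ℝ) ^ 2 + cos θ / 2 * 0 + 1 / 16) - 0 * cos θ - cos (2 * θ) / 4 = sin θ ^ 2 / 2 := by
  rw [show (0 : ℝ) ^ 2 + cos θ / 2 * 0 + 1 / 16 = (1 / 4) ^ 2 by norm_num,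
    sqrt_sq (by norm_num), cos_two_mul_eq_one_sub]
  ring

lemma one_div_sqrt_two_mul_sqrt_sq_div_two {s : ℝ} (hs : 0 ≤ s) :
    1 / √2 * √(s ^ 2 / 2) = s / 2 := by
  rw [sqrt_div' _ zero_le_two, sqrt_sq hs]
  field_simp
  rw [sq_sqrt zero_le_two, mul_comm]

/-- The imaginary part of the Voiculescu transform of a Boolean strictly `1/2`-stable law:
`φ(x) = sinθ/2 − (1/√2)·√(√(x² + (cosθ/2)x + 1/16) − x cosθ − (cos 2θ)/4)` is
nonpositive on `ℝ`, with maximum value `φ(0) = 0`. -/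
theorem boolean_half_stable_im_nonpos (θ : ℝ) (hθ0 : 0 ≤ θ) (hθπ : θ ≤ π) :
    let φ : ℝ → ℝ := fun x =>
      Real.sin θ / 2 - (1 / Real.sqrt 2) *
        Real.sqrt (Real.sqrt (x ^ 2 + (Real.cos θ / 2) * x + 1 / 16)
          - x * Real.cos θ - Real.cos (2 * θ) / 4)
    (∀ x : ℝ, φ x ≤ 0) ∧ φ 0 = 0 := by
  intro φ
  have hmin := one_div_sqrt_two_mul_sqrt_sq_div_two (sin_nonneg_of_nonneg_of_le_pi hθ0 hθπ)
  refine ⟨fun x => ?_, ?_⟩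
  · have := mul_le_mul_of_nonneg_left (sqrt_le_sqrt (sin_sq_div_two_le θ x))
      (by positivity : (0 : ℝ) ≤ 1 / √2)
    simp only [φ]
    linarith
  · simp only [φ, sqrt_at_zero_sub_cos_two_mul, hmin, sub_self]
end

section
/- Let μ be a probability measure on ℝ with finite fourth moment, nonzero variance γ₀, and Jacobi parameters β₀, β₁, γ₀, γ₁ (obtained by orthogonalizing 1, x, x² in L²(μ)). For t > 0, the Boolean power μ^{⊎t} has Jacobi parameters (tβ₀, β₁; tγ₀, γ₁), i.e. its first four moments are those of a measure with Jacobi parameters β₀ replaced by tβ₀ and γ₀ replaced by tγ₀. -/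
/-!
Put `w = 1/z` and let `M_μ(w) = ∑ mₖ wᵏ` be the moment series. Along the imaginary axis,
`z G_μ(z) = M_μ(w) + o(wⁿ)` as soon as `μ` has a finite `n`-th moment, where `G_μ = 1/F_μ`, so an
identity between Cauchy transforms forces the corresponding identity between the first `n + 1`
coefficients of power series. Since `1 - w F_μ(1/w) = 1 - 1/M_μ(w)`, the Boolean power relation
`F_ν = t F_μ + (1 - t) id` says that `η_ν = t η_μ` for `η = 1 - 1/M`: the Boolean cumulants of `ν`
(the coefficients of `η_ν`) are `t` times those of `μ`. The first four Jacobi parameters are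
`β₀ = b₁`, `γ₀ = b₂`, `β₁ = b₃/b₂` and `γ₁ = b₄/b₂ - (b₃/b₂)²` in terms of Boolean cumulants,
and the theorem follows.
-/

open MeasureTheory Complex

/-- The reciprocal Cauchy transform `F_μ(z) = 1 / ∫ (z − x)⁻¹ dμ(x)`. -/
noncomputable def cauchyF (μ : Measure ℝ) (z : ℂ) : ℂ :=
  (∫ x : ℝ, (z - (x : ℂ))⁻¹ ∂μ)⁻¹

/-- First Jacobi parameter `β₀` (the mean). -/
noncomputable def jacobiB0 (μ : Measure ℝ) : ℝ := ∫ x, x ∂μ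

/-- Jacobi parameter `γ₀ = ∫ (x − β₀)² dμ` (the variance). -/
noncomputable def jacobiG0 (μ : Measure ℝ) : ℝ := ∫ x, (x - jacobiB0 μ) ^ 2 ∂μ

/-- Jacobi parameter `β₁ = γ₀⁻¹ ∫ x (x − β₀)² dμ`. -/
noncomputable def jacobiB1 (μ : Measure ℝ) : ℝ :=
  (∫ x, x * (x - jacobiB0 μ) ^ 2 ∂μ) / jacobiG0 μ

/-- Jacobi parameter `γ₁ = γ₀⁻¹ ∫ |P₂(x)|² dμ`, `P₂(x) = (x−β₀)(x−β₁) − γ₀`. -/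
noncomputable def jacobiG1 (μ : Measure ℝ) : ℝ :=
  (∫ x, ((x - jacobiB0 μ) * (x - jacobiB1 μ) - jacobiG0 μ) ^ 2 ∂μ) / jacobiG0 μ

open Filter Topology Asymptotics Finset ProbabilityTheory
open Polynomial (aeval)

namespace Polynomial

variable {𝕜 α : Type*} [NormedField 𝕜] {l : Filter α} [l.NeBot] {w : α → 𝕜}

theorem X_dvd_of_isLittleO (hw : Tendsto w l (𝓝[≠] 0)) {p : 𝕜[X]} {n : ℕ}
    (h : (fun a => p.eval (w a)) =o[l] fun a => w a ^ n) : X ∣ p := by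
  have hw₀ : Tendsto w l (𝓝 0) := hw.mono_right nhdsWithin_le_nhds
  have hpow : (fun a => w a ^ n) =O[l] fun _ => (1 : 𝕜) :=
    ((continuous_pow n).tendsto 0 |>.comp hw₀).isBigO_one 𝕜
  have hzero : Tendsto (fun a => p.eval (w a)) l (𝓝 0) :=
    (isLittleO_one_iff 𝕜).1 (h.trans_isBigO hpow)
  rw [X_dvd_iff, coeff_zero_eq_eval_zero]
  exact tendsto_nhds_unique ((p.continuous.tendsto 0).comp hw₀) hzero

theorem X_pow_dvd_of_isLittleO (hw : Tendsto w l (𝓝[≠] 0)) {p : 𝕜[X]} {n : ℕ}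
    (h : (fun a => p.eval (w a)) =o[l] fun a => w a ^ n) : X ^ (n + 1) ∣ p := by
  induction n generalizing p with
  | zero => simpa using X_dvd_of_isLittleO hw h
  | succ n ih =>
    obtain ⟨q, rfl⟩ := X_dvd_of_isLittleO hw h
    rw [pow_succ']
    refine mul_dvd_mul_left X (ih ?_)
    have hne : ∀ᶠ a in l, w a ≠ 0 := hw self_mem_nhdsWithin
    refine ((isBigO_refl (fun a => (w a)⁻¹) l).mul_isLittleO h).congr' ?_ ?_ <;>
      filter_upwards [hne] with a ha
    · simp [inv_mul_cancel_left₀ ha]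
    · simp [pow_succ', inv_mul_cancel_left₀ ha]

end Polynomial

namespace PowerSeries

theorem X_pow_dvd_one_sub_inv_sub {k : Type*} [Field k] {f g : k⟦X⟧} (hf : constantCoeff f ≠ 0)
    (hg : constantCoeff g ≠ 0) {t : k} {n : ℕ}
    (h : X ^ n ∣ f - C t * g - C (1 - t) * f * g) :
    X ^ n ∣ (1 - g⁻¹) - C t * (1 - f⁻¹) := by
  have key : (1 - g⁻¹) - C t * (1 - f⁻¹) = -(f⁻¹ * g⁻¹) * (f - C t * g - C (1 - t) * f * g) := by
    rw [map_sub, map_one]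
    linear_combination (g⁻¹ - (1 - C t)) * PowerSeries.inv_mul_cancel f hf
      + (-(C t) * f⁻¹ - (1 - C t) * (f⁻¹ * f)) * PowerSeries.inv_mul_cancel g hg
  rw [key]
  exact h.mul_left _

theorem X_pow_dvd_sub_trunc {R : Type*} [CommRing R] (n : ℕ) (φ : R⟦X⟧) :
    X ^ n ∣ φ - (trunc n φ : R⟦X⟧) :=
  ⟨_, sub_eq_iff_eq_add.2 (eq_X_pow_mul_shift_add_trunc n φ)⟩

end PowerSeries

noncomputable def momentSeries (μ : Measure ℝ) : PowerSeries ℝ :=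
  PowerSeries.mk fun k => moment id k μ

noncomputable def booleanCumulant (μ : Measure ℝ) (k : ℕ) : ℝ :=
  PowerSeries.coeff k (1 - (momentSeries μ)⁻¹)

noncomputable def cauchyTransform (μ : Measure ℝ) (z : ℂ) : ℂ := ∫ x : ℝ, (z - x)⁻¹ ∂μ

section Moments

variable {μ : Measure ℝ}

@[simp] lemma coeff_momentSeries (k : ℕ) : PowerSeries.coeff k (momentSeries μ) = moment id k μ :=
  PowerSeries.coeff_mk _ _

lemma moment_id_eq_integral (k : ℕ) : moment id k μ = ∫ x, x ^ k ∂μ := by simp [moment_def]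

@[simp] lemma moment_id_zero [IsProbabilityMeasure μ] : moment id 0 μ = 1 := by
  simp [moment_id_eq_integral]

lemma constantCoeff_momentSeries [IsProbabilityMeasure μ] :
    PowerSeries.constantCoeff (momentSeries μ) = 1 := by
  rw [← PowerSeries.coeff_zero_eq_constantCoeff_apply, coeff_momentSeries, moment_id_zero]

@[simp] lemma booleanCumulant_zero [IsProbabilityMeasure μ] : booleanCumulant μ 0 = 0 := by
  simp [booleanCumulant, constantCoeff_momentSeries]

lemma moment_eq_sum_booleanCumulant [IsProbabilityMeasure μ] {k : ℕ} (hk : k ≠ 0) :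
    moment id k μ = ∑ p ∈ antidiagonal k, booleanCumulant μ p.1 * moment id p.2 μ := by
  have h := PowerSeries.inv_mul_cancel (momentSeries μ) (by simp [constantCoeff_momentSeries])
  have := congrArg (PowerSeries.coeff k) (sub_mul 1 (momentSeries μ)⁻¹ (momentSeries μ))
  rw [h, one_mul, PowerSeries.coeff_mul] at this
  simpa [hk, booleanCumulant] using this.symm

lemma integrable_pow_of_le [IsFiniteMeasure μ] {n k : ℕ}
    (hn : Integrable (fun x : ℝ => x ^ n) μ) (hk : k ≤ n) :
    Integrable (fun x : ℝ => x ^ k) μ := by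
  refine ((integrable_const 1).add hn.norm).mono' (by fun_prop) (ae_of_all _ fun x => ?_)
  simp only [Pi.add_apply, norm_pow, Real.norm_eq_abs]
  rcases le_total |x| 1 with hx | hx
  · linarith [pow_le_one₀ (n := k) (abs_nonneg x) hx, pow_nonneg (abs_nonneg x) n]
  · linarith [pow_le_pow_right₀ hx hk]

lemma integral_sum_mul_pow [IsFiniteMeasure μ] {n : ℕ} (hn : Integrable (fun x : ℝ => x ^ n) μ)
    (a : Fin (n + 1) → ℝ) :
    ∫ x, ∑ k, a k * x ^ (k : ℕ) ∂μ = ∑ k, a k * moment id k μ := by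
  rw [integral_finsetSum _ fun k _ => (integrable_pow_of_le hn (Nat.lt_succ_iff.1 k.2)).const_mul _]
  simp [integral_const_mul, moment_id_eq_integral]

variable [IsProbabilityMeasure μ]

lemma moment_one_eq_booleanCumulant : moment id 1 μ = booleanCumulant μ 1 := by
  simpa [Finset.Nat.sum_antidiagonal_eq_sum_range_succ_mk, Finset.sum_range_succ] using
    moment_eq_sum_booleanCumulant (μ := μ) one_ne_zero

lemma moment_two_eq_booleanCumulant :
    moment id 2 μ = booleanCumulant μ 1 * moment id 1 μ + booleanCumulant μ 2 := by
  simpa [Finset.Nat.sum_antidiagonal_eq_sum_range_succ_mk, Finset.sum_range_succ] using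
    moment_eq_sum_booleanCumulant (μ := μ) two_ne_zero

lemma moment_three_eq_booleanCumulant :
    moment id 3 μ = booleanCumulant μ 1 * moment id 2 μ + booleanCumulant μ 2 * moment id 1 μ
      + booleanCumulant μ 3 := by
  simpa [Finset.Nat.sum_antidiagonal_eq_sum_range_succ_mk, Finset.sum_range_succ, add_assoc] using
    moment_eq_sum_booleanCumulant (μ := μ) three_ne_zero

lemma moment_four_eq_booleanCumulant :
    moment id 4 μ = booleanCumulant μ 1 * moment id 3 μ + booleanCumulant μ 2 * moment id 2 μ
      + booleanCumulant μ 3 * moment id 1 μ + booleanCumulant μ 4 := by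
  simpa [Finset.Nat.sum_antidiagonal_eq_sum_range_succ_mk, Finset.sum_range_succ, add_assoc] using
    moment_eq_sum_booleanCumulant (μ := μ) four_ne_zero

lemma jacobiB0_eq_booleanCumulant : jacobiB0 μ = booleanCumulant μ 1 := by
  simpa [jacobiB0, moment_id_eq_integral] using moment_one_eq_booleanCumulant (μ := μ)

lemma jacobiG0_eq_booleanCumulant (h2 : Integrable (fun x : ℝ => x ^ 2) μ) :
    jacobiG0 μ = booleanCumulant μ 2 := by
  let b := booleanCumulant μ
  calc jacobiG0 μ = ∫ x, ∑ k, ![b 1 ^ 2, -2 * b 1, 1] k * x ^ (k : ℕ) ∂μ := by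
        rw [jacobiG0, jacobiB0_eq_booleanCumulant]; congr 1; ext x; simp [Fin.sum_univ_succ]; ring
    _ = b 2 := by
        rw [integral_sum_mul_pow h2]
        simp [Fin.sum_univ_succ, moment_two_eq_booleanCumulant, moment_one_eq_booleanCumulant, b]
        ring

lemma jacobiB1_eq_booleanCumulant (h3 : Integrable (fun x : ℝ => x ^ 3) μ) :
    jacobiB1 μ = booleanCumulant μ 3 / booleanCumulant μ 2 := by
  let b := booleanCumulant μ
  rw [jacobiB1, jacobiG0_eq_booleanCumulant (integrable_pow_of_le h3 (by norm_num))]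
  congr 1
  calc ∫ x, x * (x - jacobiB0 μ) ^ 2 ∂μ
        = ∫ x, ∑ k, ![0, b 1 ^ 2, -2 * b 1, 1] k * x ^ (k : ℕ) ∂μ := by
        rw [jacobiB0_eq_booleanCumulant]; congr 1; ext x; simp [Fin.sum_univ_succ]; ring
    _ = b 3 := by
        rw [integral_sum_mul_pow h3]
        simp [Fin.sum_univ_succ, moment_three_eq_booleanCumulant, moment_two_eq_booleanCumulant,
          moment_one_eq_booleanCumulant, b]
        ring

lemma jacobiG1_eq_booleanCumulant (h4 : Integrable (fun x : ℝ => x ^ 4) μ) :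
    jacobiG1 μ = booleanCumulant μ 4 / booleanCumulant μ 2
      - (booleanCumulant μ 3 / booleanCumulant μ 2) ^ 2 := by
  let b := booleanCumulant μ
  have hG0 : jacobiG0 μ = b 2 := jacobiG0_eq_booleanCumulant (integrable_pow_of_le h4 (by norm_num))
  rcases eq_or_ne (b 2) 0 with h | h
  · simp [jacobiG1, hG0, h, b]
  let s := b 1 + b 3 / b 2
  let p := b 1 * (b 3 / b 2) - b 2
  calc jacobiG1 μ
        = (∫ x, ∑ k, ![p ^ 2, -2 * s * p, s ^ 2 + 2 * p, -2 * s, 1] k * x ^ (k : ℕ) ∂μ) / b 2 := by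
        rw [jacobiG1, hG0, jacobiB1_eq_booleanCumulant (integrable_pow_of_le h4 (by norm_num)),
          jacobiB0_eq_booleanCumulant]
        congr 2; ext x; simp [Fin.sum_univ_succ]; ring
    _ = b 4 / b 2 - (b 3 / b 2) ^ 2 := by
        rw [integral_sum_mul_pow h4]
        simp [Fin.sum_univ_succ, moment_four_eq_booleanCumulant, moment_three_eq_booleanCumulant,
          moment_two_eq_booleanCumulant, moment_one_eq_booleanCumulant, b, s, p]
        have h : booleanCumulant μ 2 ≠ 0 := h
        field_simp
        ring

end Moments

section CauchyTransform

variable {μ : Measure ℝ} {z : ℂ}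

lemma abs_im_le_norm_sub_ofReal (z : ℂ) (x : ℝ) : |z.im| ≤ ‖z - x‖ := by
  simpa using abs_im_le_norm (z - x)

lemma integrable_inv_sub_ofReal [IsFiniteMeasure μ] (hz : z.im ≠ 0) :
    Integrable (fun x : ℝ => (z - x)⁻¹) μ := by
  refine Integrable.of_bound (by fun_prop) |z.im|⁻¹ (ae_of_all _ fun x => ?_)
  rw [norm_inv]
  exact inv_anti₀ (abs_pos.2 hz) (abs_im_le_norm_sub_ofReal z x)

lemma im_cauchyTransform_neg [IsFiniteMeasure μ] [NeZero μ] (hz : 0 < z.im) :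
    (cauchyTransform μ z).im < 0 := by
  have hint := integrable_inv_sub_ofReal (μ := μ) hz.ne'
  have hpos : ∀ x : ℝ, 0 < z.im / normSq (z - x) := fun x =>
    div_pos hz (normSq_pos.2 fun h => by simpa [hz.ne'] using congrArg im h)
  have him := integral_im hint
  simp only [RCLike.im_to_complex] at him
  rw [cauchyTransform, ← him, ← neg_pos, ← integral_neg]
  have : (fun x : ℝ => -((z - x)⁻¹).im) = fun x : ℝ => z.im / normSq (z - x) := by
    ext x; simp [inv_im, neg_div]
  rw [this, integral_pos_iff_support_of_nonneg (fun x => (hpos x).le)]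
  · rw [Function.support_eq_univ fun x => (hpos x).ne']
    exact Measure.measure_univ_pos.2 (NeZero.ne μ)
  · rw [← this]; exact hint.im.neg

lemma cauchyTransform_ne_zero [IsFiniteMeasure μ] [NeZero μ] (hz : 0 < z.im) :
    cauchyTransform μ z ≠ 0 := fun h => by
  simpa [h] using im_cauchyTransform_neg (μ := μ) hz

lemma norm_pow_succ_mul_inv_sub_le (hz : z.im ≠ 0) (n : ℕ) (x : ℝ) :
    ‖(x : ℂ) ^ (n + 1) * (z - x)⁻¹‖ ≤ (1 + ‖z‖ / |z.im|) * |x| ^ n := by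
  have him := abs_pos.2 hz
  have hsub : 0 < ‖z - x‖ := him.trans_le (abs_im_le_norm_sub_ofReal z x)
  have hx : |x| ≤ (1 + ‖z‖ / |z.im|) * ‖z - x‖ := by
    calc |x| = ‖z - (z - x)‖ := by simp
      _ ≤ ‖z‖ + ‖z - x‖ := norm_sub_le _ _
      _ ≤ ‖z‖ / |z.im| * ‖z - x‖ + ‖z - x‖ := by
          gcongr
          rw [div_mul_eq_mul_div, le_div_iff₀ him]
          exact mul_le_mul_of_nonneg_left (abs_im_le_norm_sub_ofReal z x) (norm_nonneg _)
      _ = (1 + ‖z‖ / |z.im|) * ‖z - x‖ := by ring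
  rw [norm_mul, norm_inv, norm_pow, norm_real, Real.norm_eq_abs, pow_succ, mul_assoc,
    mul_comm _ (|x| ^ n), ← div_eq_mul_inv]
  exact mul_le_mul_of_nonneg_left ((div_le_iff₀ hsub).2 hx) (pow_nonneg (abs_nonneg x) n)

lemma integrable_pow_succ_mul_inv_sub (hz : z.im ≠ 0) {n : ℕ}
    (hn : Integrable (fun x : ℝ => x ^ n) μ) :
    Integrable (fun x : ℝ => (x : ℂ) ^ (n + 1) * (z - x)⁻¹) μ := by
  refine (hn.norm.const_mul (1 + ‖z‖ / |z.im|)).mono' (by fun_prop) (ae_of_all _ fun x => ?_)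
  simpa using norm_pow_succ_mul_inv_sub_le hz n x

lemma mul_inv_sub_eq_geom_sum_add (hz : z ≠ 0) {x : ℂ} (hx : z - x ≠ 0) (n : ℕ) :
    z * (z - x)⁻¹ = ∑ k ∈ range (n + 1), x ^ k * z⁻¹ ^ k + z⁻¹ ^ n * (x ^ (n + 1) * (z - x)⁻¹) := by
  simp_rw [← mul_pow]
  -- after clearing `z - x`, this is `(∑_{k ≤ n} qᵏ) (1 - q) = 1 - qⁿ⁺¹` for `q = x / z`
  linear_combination ((z - x)⁻¹ * x ^ (n + 1) * z⁻¹ ^ n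
      - (z - x)⁻¹ * (∑ k ∈ range (n + 1), (x * z⁻¹) ^ k) * x) * mul_inv_cancel₀ hz
    - (z - x)⁻¹ * z * geom_sum_mul_neg (x * z⁻¹) (n + 1)
    + (∑ k ∈ range (n + 1), (x * z⁻¹) ^ k) * mul_inv_cancel₀ hx

lemma integral_ofReal_pow (k : ℕ) : ∫ x : ℝ, (x : ℂ) ^ k ∂μ = moment id k μ := by
  have := integral_ofReal (𝕜 := ℂ) (μ := μ) (f := fun x : ℝ => x ^ k)
  rw [moment_id_eq_integral]
  simpa using this

lemma mul_cauchyTransform_eq [IsFiniteMeasure μ] (hz : z.im ≠ 0) {n : ℕ}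
    (hn : Integrable (fun x : ℝ => x ^ n) μ) :
    z * cauchyTransform μ z = ∑ k ∈ range (n + 1), (moment id k μ : ℂ) * z⁻¹ ^ k
      + z⁻¹ ^ n * ∫ x : ℝ, (x : ℂ) ^ (n + 1) * (z - x)⁻¹ ∂μ := by
  have hz₀ : z ≠ 0 := fun h => hz (by simp [h])
  have hsub : ∀ x : ℝ, z - x ≠ 0 := fun x h => hz (by simpa using congrArg im h)
  have hpow : ∀ k ∈ range (n + 1), Integrable (fun x : ℝ => (x : ℂ) ^ k * z⁻¹ ^ k) μ :=
    fun k hk => by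
      have := (integrable_pow_of_le hn (Nat.lt_succ_iff.1 (mem_range.1 hk))).ofReal (𝕜 := ℂ)
      simpa using this.mul_const (z⁻¹ ^ k)
  rw [cauchyTransform, ← integral_const_mul]
  simp_rw [mul_inv_sub_eq_geom_sum_add hz₀ (hsub _) n]
  rw [integral_add (integrable_finsetSum _ hpow)
      ((integrable_pow_succ_mul_inv_sub hz hn).const_mul _), integral_finsetSum _ hpow,
    integral_const_mul]
  simp_rw [integral_mul_const, integral_ofReal_pow]

lemma tendsto_integral_pow_succ_mul_inv_sub {n : ℕ} (hn : Integrable (fun x : ℝ => x ^ n) μ) :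
    Tendsto (fun y : ℝ => ∫ x : ℝ, (x : ℂ) ^ (n + 1) * (I * y - x)⁻¹ ∂μ) atTop (𝓝 0) := by
  have hlim : ∀ x : ℝ, Tendsto (fun y : ℝ => (x : ℂ) ^ (n + 1) * (I * y - x)⁻¹) atTop (𝓝 0) := by
    intro x
    have : Tendsto (fun y : ℝ => I * y - x) atTop (Bornology.cobounded ℂ) := by
      rw [← tendsto_norm_atTop_iff_cobounded]
      refine tendsto_atTop_mono (fun y => ?_) tendsto_id
      exact (le_abs_self y).trans (by simpa using abs_im_le_norm_sub_ofReal (I * y) x)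
    simpa using (tendsto_inv₀_cobounded.comp this).const_mul ((x : ℂ) ^ (n + 1))
  simpa using tendsto_integral_filter_of_dominated_convergence (fun x => 2 * |x| ^ n)
    (Eventually.of_forall fun y => by fun_prop)
    (eventually_gt_atTop 0 |>.mono fun y hy => ae_of_all _ fun x => by
      simpa [abs_of_pos hy, hy.ne', one_add_one_eq_two] using
        norm_pow_succ_mul_inv_sub_le (z := I * y) (by simpa using hy.ne') n x)
    (hn.norm.const_mul 2 |>.congr (ae_of_all _ fun x => by simp))
    (ae_of_all _ hlim)

lemma tendsto_inv_I_mul_atTop : Tendsto (fun y : ℝ => (I * y)⁻¹) atTop (𝓝[≠] 0) := by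
  refine tendsto_inv₀_cobounded'.comp ?_
  rw [← tendsto_norm_atTop_iff_cobounded]
  simpa using tendsto_abs_atTop_atTop

lemma aeval_trunc_momentSeries (n : ℕ) (w : ℂ) :
    aeval w (PowerSeries.trunc n (momentSeries μ))
      = ∑ k ∈ range n, (moment id k μ : ℂ) * w ^ k := by
  simp [Polynomial.aeval_def, PowerSeries.eval₂_trunc_eq_sum_range]

lemma isLittleO_mul_cauchyTransform_sub_trunc [IsFiniteMeasure μ] {n : ℕ}
    (hn : Integrable (fun x : ℝ => x ^ n) μ) :
    (fun y : ℝ => I * y * cauchyTransform μ (I * y)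
        - aeval (I * y)⁻¹ (PowerSeries.trunc (n + 1) (momentSeries μ)))
      =o[atTop] fun y => (I * y)⁻¹ ^ n := by
  have hrem := (isLittleO_one_iff ℂ).2 (tendsto_integral_pow_succ_mul_inv_sub (μ := μ) hn)
  refine ((isBigO_refl (fun y : ℝ => (I * y)⁻¹ ^ n) atTop).mul_isLittleO hrem).congr' ?_ (by simp)
  filter_upwards [eventually_gt_atTop 0] with y hy
  rw [mul_cauchyTransform_eq (by simpa using hy.ne') hn, aeval_trunc_momentSeries]
  ring

lemma mul_cauchyTransform_of_cauchyF_eq {ν : Measure ℝ} [IsFiniteMeasure μ] [NeZero μ]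
    [IsFiniteMeasure ν] [NeZero ν] {t : ℝ} (hz : 0 < z.im)
    (h : cauchyF ν z = t * cauchyF μ z + (1 - t) * z) :
    z * cauchyTransform μ z
      = t * (z * cauchyTransform ν z)
        + (1 - t) * (z * cauchyTransform μ z) * (z * cauchyTransform ν z) := by
  have hμ := cauchyTransform_ne_zero (μ := μ) hz
  have hν := cauchyTransform_ne_zero (μ := ν) hz
  change (cauchyTransform ν z)⁻¹ = t * (cauchyTransform μ z)⁻¹ + (1 - t) * z at h
  field_simp at h
  linear_combination z * h

theorem X_pow_dvd_trunc_of_cauchyF_eq {ν : Measure ℝ} [IsFiniteMeasure μ] [NeZero μ]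
    [IsFiniteMeasure ν] [NeZero ν] {n : ℕ} (hμ : Integrable (fun x : ℝ => x ^ n) μ)
    (hν : Integrable (fun x : ℝ => x ^ n) ν) {t : ℝ}
    (h : ∀ z : ℂ, 0 < z.im → cauchyF ν z = t * cauchyF μ z + (1 - t) * z) :
    Polynomial.X ^ (n + 1) ∣ PowerSeries.trunc (n + 1) (momentSeries μ)
      - Polynomial.C t * PowerSeries.trunc (n + 1) (momentSeries ν)
      - Polynomial.C (1 - t) * PowerSeries.trunc (n + 1) (momentSeries μ)
        * PowerSeries.trunc (n + 1) (momentSeries ν) := by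
  set P := PowerSeries.trunc (n + 1) (momentSeries μ)
  set Q := PowerSeries.trunc (n + 1) (momentSeries ν)
  set w : ℝ → ℂ := fun y => (I * y)⁻¹
  set H : Measure ℝ → ℝ → ℂ := fun μ y => I * y * cauchyTransform μ (I * y)
  have Eμ := isLittleO_mul_cauchyTransform_sub_trunc hμ
  have Eν := isLittleO_mul_cauchyTransform_sub_trunc hν
  have hw : Tendsto w atTop (𝓝 0) := tendsto_inv_I_mul_atTop.mono_right nhdsWithin_le_nhds
  have hP : (fun y => aeval (w y) P) =O[atTop] fun _ => (1 : ℂ) :=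
    ((Polynomial.continuous_aeval P).tendsto 0 |>.comp hw).isBigO_one ℂ
  have hQ : (fun y => aeval (w y) Q) =O[atTop] fun _ => (1 : ℂ) :=
    ((Polynomial.continuous_aeval Q).tendsto 0 |>.comp hw).isBigO_one ℂ
  have hwn : (fun y => w y ^ n) =O[atTop] fun _ => (1 : ℂ) :=
    ((continuous_pow n).tendsto 0 |>.comp hw).isBigO_one ℂ
  have hHν : H ν =O[atTop] fun _ => (1 : ℂ) :=
    ((Eν.isBigO.trans hwn).add hQ).congr_left fun y => sub_add_cancel _ _
  have hrel : ∀ᶠ y in atTop, H μ y = t * H ν y + (1 - t) * H μ y * H ν y := by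
    filter_upwards [eventually_gt_atTop 0] with y hy
    exact mul_cauchyTransform_of_cauchyF_eq (by simpa using hy) (h _ (by simpa using hy))
  have h1 : (fun y => (H μ y - aeval (w y) P) * H ν y) =o[atTop] fun y => w y ^ n := by
    simpa only [mul_one] using Eμ.mul_isBigO hHν
  have h2 : (fun y => aeval (w y) P * (H ν y - aeval (w y) Q)) =o[atTop] fun y => w y ^ n := by
    simpa only [one_mul] using hP.mul_isLittleO Eν
  rw [← Polynomial.map_dvd_map (algebraMap ℝ ℂ) (algebraMap ℝ ℂ).injective
    (Polynomial.monic_X_pow _), Polynomial.map_pow, Polynomial.map_X]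
  refine Polynomial.X_pow_dvd_of_isLittleO tendsto_inv_I_mul_atTop ?_
  -- by `hrel`, the polynomial evaluates to `-(Hμ - P) + t (Hν - Q) + (1 - t) ((Hμ - P) Hν + P (Hν - Q))`
  refine ((Eμ.neg_left.add (Eν.const_mul_left (t : ℂ))).add
    ((h1.add h2).const_mul_left (1 - (t : ℂ)))).congr' ?_ EventuallyEq.rfl
  filter_upwards [hrel] with y hy
  simp only [Polynomial.eval_map_algebraMap, map_sub, map_mul, Polynomial.aeval_C,
    Complex.coe_algebraMap, Complex.ofReal_one]
  linear_combination -hy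

end CauchyTransform

open PowerSeries in
theorem booleanCumulant_of_cauchyF_eq {μ ν : Measure ℝ} [IsProbabilityMeasure μ]
    [IsProbabilityMeasure ν] {n : ℕ} (hμ : Integrable (fun x : ℝ => x ^ n) μ)
    (hν : Integrable (fun x : ℝ => x ^ n) ν) {t : ℝ}
    (h : ∀ z : ℂ, 0 < z.im → cauchyF ν z = t * cauchyF μ z + (1 - t) * z) {k : ℕ} (hk : k ≤ n) :
    booleanCumulant ν k = t * booleanCumulant μ k := by
  have hpoly := map_dvd Polynomial.coeToPowerSeries.ringHom (X_pow_dvd_trunc_of_cauchyF_eq hμ hν h)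
  simp only [Polynomial.coeToPowerSeries.ringHom_apply, Polynomial.coe_sub, Polynomial.coe_mul,
    Polynomial.coe_pow, Polynomial.coe_X, Polynomial.coe_C] at hpoly
  set M := momentSeries μ
  set N := momentSeries ν
  set P : ℝ⟦X⟧ := (trunc (n + 1) M : ℝ⟦X⟧)
  set Q : ℝ⟦X⟧ := (trunc (n + 1) N : ℝ⟦X⟧)
  have hseries : X ^ (n + 1) ∣ M - C t * N - C (1 - t) * M * N := by
    have : M - C t * N - C (1 - t) * M * N = (P - C t * Q - C (1 - t) * P * Q)
        + ((M - P) - C t * (N - Q) - C (1 - t) * ((M - P) * N + P * (N - Q))) := by ring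
    rw [this]
    have hM := X_pow_dvd_sub_trunc (n + 1) M
    have hN := X_pow_dvd_sub_trunc (n + 1) N
    exact hpoly.add ((hM.sub (hN.mul_left _)).sub
      ((hM.mul_right _).add (hN.mul_left _) |>.mul_left _))
  have := X_pow_dvd_iff.1 (X_pow_dvd_one_sub_inv_sub (by simp [M, constantCoeff_momentSeries])
    (by simp [N, constantCoeff_momentSeries]) hseries) k (Nat.lt_succ_of_le hk)
  rwa [map_sub, coeff_C_mul, sub_eq_zero] at this

theorem boolean_power_jacobi_general (μ ν : Measure ℝ)
    [IsProbabilityMeasure μ] [IsProbabilityMeasure ν]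
    (h4μ : Integrable (fun x : ℝ => x ^ 4) μ)
    (h4ν : Integrable (fun x : ℝ => x ^ 4) ν)
    (t : ℝ) (ht : 0 < t)
    (hboole : ∀ z : ℂ, 0 < z.im →
      cauchyF ν z = (t : ℂ) * cauchyF μ z + (1 - (t : ℂ)) * z) :
    jacobiB0 ν = t * jacobiB0 μ ∧ jacobiG0 ν = t * jacobiG0 μ ∧
      jacobiB1 ν = jacobiB1 μ ∧ jacobiG1 ν = jacobiG1 μ := by
  have hb {k : ℕ} (hk : k ≤ 4) := booleanCumulant_of_cauchyF_eq h4μ h4ν hboole hk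
  have h2μ := integrable_pow_of_le h4μ (by norm_num : 2 ≤ 4)
  have h2ν := integrable_pow_of_le h4ν (by norm_num : 2 ≤ 4)
  have h3μ := integrable_pow_of_le h4μ (by norm_num : 3 ≤ 4)
  have h3ν := integrable_pow_of_le h4ν (by norm_num : 3 ≤ 4)
  rw [jacobiB0_eq_booleanCumulant, jacobiB0_eq_booleanCumulant, jacobiG0_eq_booleanCumulant h2μ,
    jacobiG0_eq_booleanCumulant h2ν, jacobiB1_eq_booleanCumulant h3μ,
    jacobiB1_eq_booleanCumulant h3ν, jacobiG1_eq_booleanCumulant h4μ,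
    jacobiG1_eq_booleanCumulant h4ν, hb (by norm_num : 1 ≤ 4), hb (by norm_num : 2 ≤ 4),
    hb (by norm_num : 3 ≤ 4), hb (by norm_num : 4 ≤ 4), mul_div_mul_left _ _ ht.ne',
    mul_div_mul_left _ _ ht.ne']
  exact ⟨rfl, rfl, rfl, rfl⟩

/-- If `ν = μ^{⊎t}` is the Boolean power, i.e. `F_ν = t F_μ + (1−t) id`, then the
Jacobi parameters of `ν` are `(tβ₀, β₁; tγ₀, γ₁)`. -/
theorem boolean_power_jacobi (μ ν : Measure ℝ)
    [IsProbabilityMeasure μ] [IsProbabilityMeasure ν]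
    (h4μ : Integrable (fun x : ℝ => x ^ 4) μ)
    (h4ν : Integrable (fun x : ℝ => x ^ 4) ν)
    (hγ0 : jacobiG0 μ ≠ 0) (t : ℝ) (ht : 0 < t)
    (hboole : ∀ z : ℂ, 0 < z.im →
      cauchyF ν z = (t : ℂ) * cauchyF μ z + (1 - (t : ℂ)) * z) :
    jacobiB0 ν = t * jacobiB0 μ ∧ jacobiG0 ν = t * jacobiG0 μ ∧
      jacobiB1 ν = jacobiB1 μ ∧ jacobiG1 ν = jacobiG1 μ :=
  boolean_power_jacobi_general μ ν h4μ h4ν t ht hboole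
end
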